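/- Let n ≥ 1. Let W(x,t) = (4πt)^{-n/2} e^{-|x|²/(4t)} for t > 0, x ∈ ℝⁿ, let E = {(x,t) : t > 0, W(x,t) ≥ 1}, and let 𝓗(x,t) = (1/4) χ_E(x,t) |x|²/t². Then ∬_{ℝⁿ×ℝ} s 𝓗(y,s) dy ds = (1/(2n)) ∬_{ℝⁿ×ℝ} |y|² 𝓗(y,s) dy ds. Consequently, with μ = −∬ s 𝓗(y,s) dy ds and ν = (1/(2n)) ∬ |y|² 𝓗(y,s) dy ds, one has μ = −ν. -/

import Mathlib

open MeasureTheory Real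
open Set Metric

/-- The Weierstrass (Gauss–Weierstrass heat) kernel on `ℝⁿ`:
`W(x,t) = (4πt)^{-n/2} e^{-|x|²/(4t)}` for `t > 0`. -/
noncomputable def weierstrassW (n : ℕ) (x : EuclideanSpace ℝ (Fin n)) (t : ℝ) : ℝ :=
  (4 * Real.pi * t) ^ (-(n : ℝ) / 2) * Real.exp (-‖x‖ ^ 2 / (4 * t))

/-- The parabolic mean value kernel for the heat equation:
`𝓗(x,t) = (1/4) |x|²/t²` on the unit heat ball `E = {(x,t) : t > 0, W(x,t) ≥ 1}`,
and `0` elsewhere. -/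
noncomputable def heatMVKernel (n : ℕ) (p : EuclideanSpace ℝ (Fin n) × ℝ) : ℝ :=
  if 0 < p.2 ∧ 1 ≤ weierstrassW n p.1 p.2 then (1 / 4) * ‖p.1‖ ^ 2 / p.2 ^ 2 else 0

noncomputable def hmvkKern (n k : ℕ) (p : EuclideanSpace ℝ (Fin n) × ℝ) : ℝ :=
  if 0 < p.2 ∧ 1 ≤ weierstrassW n p.1 p.2 then (1 / 4) * ‖p.1‖ ^ (2 * k) / p.2 ^ k else 0

noncomputable def hmvkBallVol (n : ℕ) : ℝ :=
  (volume (Metric.ball (0 : EuclideanSpace ℝ (Fin n)) 1)).toReal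

noncomputable def hmvkD (n k : ℕ) : ℝ :=
  (n : ℝ) * hmvkBallVol n * (2 * (n : ℝ)) ^ ((n : ℝ) / 2 + (k : ℝ)) / (4 * ((n : ℝ) + 2 * (k : ℝ)))


lemma hmvk_W_iff {n : ℕ} {x : EuclideanSpace ℝ (Fin n)} {s : ℝ} (hs : 0 < s) :
    1 ≤ weierstrassW n x s ↔ ‖x‖ ^ 2 ≤ 2 * (n : ℝ) * s * (-Real.log (4 * Real.pi * s)) := by
  have hb : (0:ℝ) < 4 * Real.pi * s := by positivity
  have h4s : (0:ℝ) < 4 * s := by positivity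
  have hW : weierstrassW n x s
      = Real.exp ((-(n : ℝ) / 2) * Real.log (4 * Real.pi * s) + -(‖x‖ ^ 2 / (4 * s))) := by
    rw [weierstrassW, Real.rpow_def_of_pos hb, ← Real.exp_add, neg_div ]
    ring_nf
  rw [hW, Real.one_le_exp_iff]
  have hring : (-(n : ℝ)/2 * Real.log (4 * Real.pi * s)) * (4*s)
      = 2 * (n : ℝ) * s * (-Real.log (4 * Real.pi * s)) := by ring
  constructor
  · intro h
    have h1 : ‖x‖^2/(4*s) ≤ -(n : ℝ)/2 * Real.log (4 * Real.pi * s) := by linarith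
    have h2 := (div_le_iff₀ h4s).mp h1
    linarith
  · intro h
    have h2 : ‖x‖^2 ≤ (-(n : ℝ)/2 * Real.log (4 * Real.pi * s)) * (4*s) := by linarith
    have h1 := (div_le_iff₀ h4s).mpr h2
    linarith

lemma hmvk_polar {n : ℕ} (hn : 1 ≤ n) (j : ℕ) {R : ℝ} (hR : 0 ≤ R) :
    (∫ x : EuclideanSpace ℝ (Fin n), (if ‖x‖ ≤ R then ‖x‖ ^ j else 0))
      = (n : ℝ) * hmvkBallVol n * (R ^ (n + j) / (n + j)) := by
  haveI : NeZero n := ⟨by omega⟩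
  haveI : Nontrivial (EuclideanSpace ℝ (Fin n)) := inferInstance
  have hpolar := MeasureTheory.integral_fun_norm_addHaar
    (volume : Measure (EuclideanSpace ℝ (Fin n)))
    (fun y : ℝ => if y ≤ R then y ^ j else 0)
  rw [finrank_euclideanSpace, Fintype.card_fin] at hpolar
  rw [hpolar]
  have hinner : (∫ y in Set.Ioi (0:ℝ), y ^ (n-1) • (if y ≤ R then y ^ j else 0))
      = R ^ (n + j) / (n + j) := by
    have he : (fun y : ℝ => y ^ (n-1) • (if y ≤ R then y ^ j else 0))
        = fun y : ℝ => Set.indicator (Set.Iic R) (fun y => y ^ (n - 1 + j)) y := by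
      funext y
      by_cases h : y ≤ R <;> simp [Set.indicator, h, pow_add, smul_eq_mul]
    rw [he, MeasureTheory.setIntegral_indicator measurableSet_Iic, Set.Ioi_inter_Iic,
      ← intervalIntegral.integral_of_le hR, integral_pow]
    have hnj : n - 1 + j + 1 = n + j := by omega
    rw [hnj, zero_pow (by omega)]
    have hc : ((n - 1 + j : ℕ) : ℝ) + 1 = (n : ℝ) + j := by
      have : n - 1 + j + 1 = n + j := by omega
      calc ((n - 1 + j : ℕ) : ℝ) + 1 = ((n - 1 + j + 1 : ℕ) : ℝ) := by push_cast; ring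
        _ = (n : ℝ) + j := by rw [this]; push_cast; ring
    rw [hc, sub_zero]
  rw [hinner]
  simp only [smul_eq_mul, nsmul_eq_mul, hmvkBallVol, measureReal_def]
  ring

lemma hmvk_kern_nonneg {n k : ℕ} (p : EuclideanSpace ℝ (Fin n) × ℝ) : 0 ≤ hmvkKern n k p := by
  unfold hmvkKern
  split
  · next h =>
    have h2 := h.1
    positivity
  · exact le_refl 0

lemma hmvk_measurable (n k : ℕ) : Measurable (hmvkKern n k) := by
  have hg : Measurable fun p : EuclideanSpace ℝ (Fin n) × ℝ =>
      Real.exp ((-(n : ℝ) / 2) * Real.log (4 * Real.pi * p.2) + -‖p.1‖ ^ 2 / (4 * p.2)) := by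
    apply Measurable.exp
    apply Measurable.add
    · exact measurable_const.mul (measurable_const.mul measurable_snd).log
    · exact ((measurable_fst.norm.pow measurable_const).neg).div
        (measurable_const.mul measurable_snd)
  have hset : MeasurableSet {p : EuclideanSpace ℝ (Fin n) × ℝ |
      0 < p.2 ∧ 1 ≤ weierstrassW n p.1 p.2} := by
    have he : {p : EuclideanSpace ℝ (Fin n) × ℝ | 0 < p.2 ∧ 1 ≤ weierstrassW n p.1 p.2}
        = {p : EuclideanSpace ℝ (Fin n) × ℝ | 0 < p.2} ∩ {p : EuclideanSpace ℝ (Fin n) × ℝ |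
            1 ≤ Real.exp ((-(n : ℝ) / 2) * Real.log (4 * Real.pi * p.2) + -‖p.1‖ ^ 2 / (4 * p.2))} := by
      ext p
      simp only [Set.mem_setOf_eq, Set.mem_inter_iff]
      constructor
      · rintro ⟨hs, hw⟩
        refine ⟨hs, ?_⟩
        rw [weierstrassW, Real.rpow_def_of_pos (by positivity)] at hw
        rw [← Real.exp_add] at hw
        convert hw using 3
        ring
      · rintro ⟨hs, hw⟩
        refine ⟨hs, ?_⟩
        rw [weierstrassW, Real.rpow_def_of_pos (by positivity), ← Real.exp_add]
        convert hw using 3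
        ring
    rw [he]
    exact (measurable_snd measurableSet_Ioi).inter (measurableSet_le measurable_const hg)
  exact Measurable.ite hset
    ((measurable_const.mul (measurable_fst.norm.pow measurable_const)).div
      (measurable_snd.pow measurable_const)) measurable_const

lemma hmvk_image_eq :
    (fun v => Real.exp (-v) / (4 * Real.pi)) '' Set.Ioi 0 = Set.Ioo 0 (4 * Real.pi)⁻¹ := by
  have hpi : (0:ℝ) < 4 * Real.pi := by positivity
  ext s
  constructor
  · rintro ⟨v, hv, rfl⟩
    refine ⟨by positivity, ?_⟩
    rw [inv_eq_one_div]
    rw [div_lt_div_iff_of_pos_right hpi]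
    exact Real.exp_lt_one_iff.mpr (by simpa using hv)
  · rintro ⟨hs0, hsT⟩
    refine ⟨-Real.log (4 * Real.pi * s), ?_, ?_⟩
    · have h1 : 4 * Real.pi * s < 1 := by
        have := mul_lt_mul_of_pos_left hsT hpi
        rwa [mul_inv_cancel₀ (ne_of_gt hpi)] at this
      have := Real.log_neg (by positivity) h1
      simpa using this
    · show Real.exp (-(-Real.log (4 * Real.pi * s))) / (4 * Real.pi) = s
      rw [neg_neg, Real.exp_log (by positivity)]
      field_simp

lemma hmvk_deriv (v : ℝ) :
    HasDerivAt (fun v => Real.exp (-v) / (4 * Real.pi)) (-(Real.exp (-v) / (4 * Real.pi))) v := by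
  have h1 : HasDerivAt (fun v : ℝ => Real.exp (-v)) (-Real.exp (-v)) v := by
    have := (Real.hasDerivAt_exp (-v)).comp v (hasDerivAt_neg v)
    simpa [Function.comp_def] using this
  simpa [neg_div] using h1.div_const (4 * Real.pi)

lemma hmvk_inj : Set.InjOn (fun v => Real.exp (-v) / (4 * Real.pi)) (Set.Ioi 0) := by
  intro a _ b _ h
  have hpi : (4 * Real.pi) ≠ 0 := by positivity
  field_simp at h
  simpa using h

lemma hmvk_integrand_eq {n : ℕ} (κ : ℝ) (v : ℝ) :
    |(-(Real.exp (-v) / (4 * Real.pi)))| •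
        ((fun s => s ^ ((n : ℝ) / 2) * (-Real.log (4 * Real.pi * s)) ^ κ)
          (Real.exp (-v) / (4 * Real.pi)))
      = (4 * Real.pi) ^ (-(n : ℝ) / 2 - 1) *
          (v ^ κ * Real.exp (-((n : ℝ) / 2 + 1) * v)) := by
  have hpi : (0:ℝ) < 4 * Real.pi := by positivity
  have h1 : 4 * Real.pi * (Real.exp (-v) / (4 * Real.pi)) = Real.exp (-v) := by
    field_simp
  have h2 : -Real.log (4 * Real.pi * (Real.exp (-v) / (4 * Real.pi))) = v := by
    rw [h1, Real.log_exp, neg_neg]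
  simp only [smul_eq_mul, abs_neg,
    abs_of_pos (show (0:ℝ) < Real.exp (-v) / (4*Real.pi) by positivity)]
  rw [h2, Real.div_rpow (Real.exp_nonneg _) (le_of_lt hpi), ← Real.exp_mul]
  rw [show -(n:ℝ)/2 = -((n:ℝ)/2) from neg_div _ _, Real.rpow_sub hpi, Real.rpow_one,
    Real.rpow_neg (le_of_lt hpi),
    show -((n:ℝ)/2 + 1)*v = -v*((n:ℝ)/2) + -v from by ring, Real.exp_add]
  have hne : ((4:ℝ)*Real.pi) ^ ((n:ℝ)/2) ≠ 0 := by positivity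
  field_simp

lemma hmvk_gamma_int {n : ℕ} (κ : ℝ) (hκ : 0 ≤ κ) :
    (∫ v in Set.Ioi (0:ℝ), v ^ κ * Real.exp (-((n : ℝ) / 2 + 1) * v))
      = ((n : ℝ) / 2 + 1) ^ (-(κ + 1)) * Real.Gamma (κ + 1) := by
  have hb : (0:ℝ) < (n : ℝ) / 2 + 1 := by positivity
  have := integral_rpow_mul_exp_neg_mul_rpow (p := 1) (q := κ) (b := (n : ℝ) / 2 + 1)
    one_pos (by linarith) hb
  simp only [Real.rpow_one, div_one, one_div_one, mul_one] at this
  exact this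

lemma hmvk_cov {n : ℕ} (κ : ℝ) (hκ : 0 ≤ κ) :
    (∫ s in Set.Ioo 0 (4 * Real.pi)⁻¹,
        s ^ ((n : ℝ) / 2) * (-Real.log (4 * Real.pi * s)) ^ κ)
      = (4 * Real.pi) ^ (-(n : ℝ) / 2 - 1) *
          (((n : ℝ) / 2 + 1) ^ (-(κ + 1)) * Real.Gamma (κ + 1)) := by
  rw [← hmvk_image_eq,
    integral_image_eq_integral_abs_deriv_smul measurableSet_Ioi
      (fun v _ => (hmvk_deriv v).hasDerivWithinAt) hmvk_inj]
  rw [MeasureTheory.setIntegral_congr_fun measurableSet_Ioi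
    (fun v _ => hmvk_integrand_eq (n := n) κ v)]
  rw [MeasureTheory.integral_const_mul _ _, hmvk_gamma_int κ hκ]

lemma hmvk_cov_int {n : ℕ} (κ : ℝ) (hκ : 0 ≤ κ) :
    IntegrableOn (fun s => s ^ ((n : ℝ) / 2) * (-Real.log (4 * Real.pi * s)) ^ κ)
      (Set.Ioo 0 (4 * Real.pi)⁻¹) := by
  rw [← hmvk_image_eq,
    integrableOn_image_iff_integrableOn_abs_deriv_smul measurableSet_Ioi
      (fun v _ => (hmvk_deriv v).hasDerivWithinAt) hmvk_inj]
  apply MeasureTheory.IntegrableOn.congr_fun _ (fun v _ => (hmvk_integrand_eq (n := n) κ v).symm)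
    measurableSet_Ioi
  apply Integrable.const_mul
  have hb : (0:ℝ) < (n : ℝ) / 2 + 1 := by positivity
  have h := integrableOn_rpow_mul_exp_neg_mul_rpow (p := 1) (s := κ) (b := (n : ℝ) / 2 + 1)
    (by linarith) one_pos hb
  simp only [Real.rpow_one] at h
  apply h.congr_fun _ measurableSet_Ioi
  intro v _
  ring_nf

lemma hmvk_slice_eq {n k : ℕ} {s : ℝ} (hs : 0 < s) :
    (fun x : EuclideanSpace ℝ (Fin n) => hmvkKern n k (x, s))
      = Set.indicator {x : EuclideanSpace ℝ (Fin n) |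
            ‖x‖ ^ 2 ≤ 2 * (n : ℝ) * s * (-Real.log (4 * Real.pi * s))}
          (fun x => (1 / 4) * ‖x‖ ^ (2 * k) / s ^ k) := by
  funext x
  simp only [hmvkKern, Set.indicator, Set.mem_setOf_eq]
  by_cases h : ‖x‖ ^ 2 ≤ 2 * (n : ℝ) * s * (-Real.log (4 * Real.pi * s))
  · rw [if_pos h, if_pos ⟨hs, (hmvk_W_iff hs).mpr h⟩]
  · rw [if_neg h, if_neg (fun hc => h ((hmvk_W_iff hs).mp hc.2))]

lemma hmvk_slice_closed {n : ℕ} (c : ℝ) :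
    IsClosed {x : EuclideanSpace ℝ (Fin n) | ‖x‖ ^ 2 ≤ c} :=
  isClosed_le (by continuity) continuous_const

lemma hmvk_slice_compact {n : ℕ} (c : ℝ) :
    IsCompact {x : EuclideanSpace ℝ (Fin n) | ‖x‖ ^ 2 ≤ c} := by
  apply (isCompact_closedBall (0 : EuclideanSpace ℝ (Fin n)) (Real.sqrt (max c 0))).of_isClosed_subset
    (hmvk_slice_closed c)
  intro x hx
  simp only [Set.mem_setOf_eq] at hx
  rw [Metric.mem_closedBall, dist_zero_right]
  rw [← Real.sqrt_sq (norm_nonneg x)]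
  exact Real.sqrt_le_sqrt (le_trans hx (le_max_left _ _))

lemma hmvk_inner_integrable {n : ℕ} (hn : 1 ≤ n) (k : ℕ) (s : ℝ) :
    Integrable (fun x : EuclideanSpace ℝ (Fin n) => hmvkKern n k (x, s)) := by
  by_cases hs : 0 < s
  · rw [hmvk_slice_eq hs]
    rw [integrable_indicator_iff (hmvk_slice_closed _).measurableSet]
    apply ContinuousOn.integrableOn_compact (hmvk_slice_compact _)
    apply Continuous.continuousOn
    continuity
  · have : (fun x : EuclideanSpace ℝ (Fin n) => hmvkKern n k (x, s)) = fun _ => 0 := by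
      funext x
      simp only [hmvkKern]
      rw [if_neg (fun hc => hs hc.1)]
    rw [this]
    exact integrable_zero _ _ _

lemma hmvk_inner_eq {n : ℕ} (hn : 1 ≤ n) (k : ℕ) (s : ℝ) :
    (∫ x : EuclideanSpace ℝ (Fin n), hmvkKern n k (x, s))
      = Set.indicator (Set.Ioo 0 (4 * Real.pi)⁻¹)
          (fun s => hmvkD n k * s ^ ((n : ℝ) / 2) *
            (-Real.log (4 * Real.pi * s)) ^ ((n : ℝ) / 2 + (k : ℝ))) s := by
  haveI : NeZero n := ⟨by omega⟩
  by_cases hs : 0 < s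
  · set u : ℝ := -Real.log (4 * Real.pi * s) with hu
    set r2 : ℝ := 2 * (n : ℝ) * s * u with hr2
    rw [hmvk_slice_eq hs]
    by_cases hsT : s < (4 * Real.pi)⁻¹
    · -- main case
      have hpi : (0:ℝ) < 4 * Real.pi := by positivity
      have h1 : 4 * Real.pi * s < 1 := by
        have := mul_lt_mul_of_pos_left hsT hpi
        rwa [mul_inv_cancel₀ (ne_of_gt hpi)] at this
      have hu0 : 0 < u := by
        have := Real.log_neg (by positivity) h1
        simp only [hu]; linarith
      have hr2pos : 0 < r2 := by
        have hn0 : (0:ℝ) < (n:ℝ) := by exact_mod_cast Nat.pos_of_ne_zero (by omega)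
        positivity
      set R : ℝ := Real.sqrt r2 with hR
      have hRpos : 0 < R := Real.sqrt_pos.mpr hr2pos
      have hsetR : {x : EuclideanSpace ℝ (Fin n) | ‖x‖ ^ 2 ≤ r2}
          = {x : EuclideanSpace ℝ (Fin n) | ‖x‖ ≤ R} := by
        ext x
        simp only [Set.mem_setOf_eq, hR]
        exact (Real.le_sqrt (norm_nonneg x) hr2pos.le).symm
      rw [hsetR]
      have hfe : (fun x : EuclideanSpace ℝ (Fin n) => Set.indicator
            {x : EuclideanSpace ℝ (Fin n) | ‖x‖ ≤ R} (fun x => (1/4) * ‖x‖ ^ (2*k) / s ^ k) x)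
          = fun x : EuclideanSpace ℝ (Fin n) =>
              (1/(4 * s ^ k)) * (if ‖x‖ ≤ R then ‖x‖ ^ (2*k) else 0) := by
        funext x
        have hsk : s ^ k ≠ 0 := pow_ne_zero _ (ne_of_gt hs)
        by_cases h : ‖x‖ ≤ R
        · simp only [Set.indicator, Set.mem_setOf_eq, if_pos h]
          field_simp
        · simp only [Set.indicator, Set.mem_setOf_eq, if_neg h, mul_zero]
      rw [show (Set.indicator {x : EuclideanSpace ℝ (Fin n) | ‖x‖ ≤ R}
            (fun x => (1/4) * ‖x‖ ^ (2*k) / s ^ k)) = _ from hfe,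
        MeasureTheory.integral_const_mul _ _, hmvk_polar hn (2*k) hRpos.le]
      rw [Set.indicator_of_mem (Set.mem_Ioo.mpr ⟨hs, hsT⟩)]
      -- now pure algebra
      have hcast : ((n + 2*k : ℕ) : ℝ) = (n:ℝ) + 2*(k:ℝ) := by push_cast; ring
      have hRpow : R ^ (n + 2*k) = (2*(n:ℝ)) ^ ((n:ℝ)/2 + (k:ℝ)) * (s ^ ((n:ℝ)/2) * s ^ k)
          * u ^ ((n:ℝ)/2 + (k:ℝ)) := by
        have h1 : R ^ (n + 2*k) = r2 ^ (((n:ℝ)/2 + (k:ℝ))) := by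
          rw [← Real.rpow_natCast R (n + 2*k), hR, Real.sqrt_eq_rpow,
            ← Real.rpow_mul hr2pos.le]
          congr 1
          rw [hcast]; ring
        rw [h1, hr2]
        have hn0 : (0:ℝ) ≤ 2 * (n:ℝ) := by positivity
        rw [Real.mul_rpow (by positivity) hu0.le, Real.mul_rpow hn0 hs.le,
          Real.rpow_add hs, Real.rpow_natCast]
      rw [hRpow, hmvkD]
      have hsk : s ^ k ≠ 0 := pow_ne_zero _ (ne_of_gt hs)
      have hnk : (n:ℝ) + 2*(k:ℝ) ≠ 0 := by
        have : (1:ℝ) ≤ (n:ℝ) := by exact_mod_cast hn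
        positivity
      rw [show ((2*k : ℕ) : ℝ) = 2*(k:ℝ) from by push_cast; ring]
      rw [show (-Real.log (4 * Real.pi * s)) = u from rfl]
      field_simp
    · -- s ≥ T : integral is 0
      have hsT' : (4 * Real.pi)⁻¹ ≤ s := le_of_not_gt hsT
      have hu0 : u ≤ 0 := by
        have h1 : (1:ℝ) ≤ 4 * Real.pi * s := by
          have hpi : (0:ℝ) < 4 * Real.pi := by positivity
          calc (1:ℝ) = 4 * Real.pi * (4 * Real.pi)⁻¹ := (mul_inv_cancel₀ (ne_of_gt hpi)).symm
            _ ≤ 4 * Real.pi * s := by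
                apply mul_le_mul_of_nonneg_left hsT' (le_of_lt hpi)
        have := Real.log_nonneg h1
        simp only [hu]; linarith
      have hr2le : r2 ≤ 0 := by
        have hn0 : (0:ℝ) ≤ (n:ℝ) := Nat.cast_nonneg n
        have : 0 ≤ 2 * (n:ℝ) * s := by positivity
        exact mul_nonpos_of_nonneg_of_nonpos this hu0
      have hsub : {x : EuclideanSpace ℝ (Fin n) | ‖x‖ ^ 2 ≤ r2} ⊆ {(0 : EuclideanSpace ℝ (Fin n))} := by
        intro x hx
        simp only [Set.mem_setOf_eq] at hx
        have : ‖x‖ ^ 2 ≤ 0 := le_trans hx hr2le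
        have hx0 : ‖x‖ = 0 := by nlinarith [norm_nonneg x, sq_nonneg ‖x‖]
        simpa using norm_eq_zero.mp hx0
      haveI : Nontrivial (EuclideanSpace ℝ (Fin n)) := inferInstance
      have hnull : volume {x : EuclideanSpace ℝ (Fin n) | ‖x‖ ^ 2 ≤ r2} = 0 :=
        measure_mono_null hsub (measure_singleton 0)
      have hrz : (volume : Measure (EuclideanSpace ℝ (Fin n))).restrict
          {x : EuclideanSpace ℝ (Fin n) | ‖x‖ ^ 2 ≤ r2} = 0 :=
        MeasureTheory.Measure.restrict_eq_zero.mpr hnull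
      rw [MeasureTheory.integral_indicator (hmvk_slice_closed _).measurableSet]
      rw [show ∫ (x : EuclideanSpace ℝ (Fin n)) in {x | ‖x‖ ^ 2 ≤ 2 * ↑n * s * -Real.log (4 * Real.pi * s)},
            1 / 4 * ‖x‖ ^ (2 * k) / s ^ k ∂volume = 0 from by rw [hrz]; exact integral_zero_measure _]
      rw [Set.indicator_of_notMem (fun hc => hsT hc.2)]
  · -- s ≤ 0
    have hz : (fun x : EuclideanSpace ℝ (Fin n) => hmvkKern n k (x, s)) = fun _ => 0 := by
      funext x
      simp only [hmvkKern]
      rw [if_neg (fun hc => hs hc.1)]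
    rw [hz, MeasureTheory.integral_zero, Set.indicator_of_notMem (fun hc => hs hc.1)]

lemma hmvk_integral {n : ℕ} (hn : 1 ≤ n) (k : ℕ) :
    (∫ p : EuclideanSpace ℝ (Fin n) × ℝ, hmvkKern n k p)
      = hmvkD n k * ((4 * Real.pi) ^ (-(n : ℝ) / 2 - 1) *
          (((n : ℝ) / 2 + 1) ^ (-(((n : ℝ) / 2 + (k : ℝ)) + 1)) *
            Real.Gamma ((n : ℝ) / 2 + (k : ℝ) + 1))) := by
  have hκ : (0:ℝ) ≤ (n : ℝ) / 2 + (k : ℝ) := by positivity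
  have hGint : Integrable (Set.indicator (Set.Ioo 0 (4 * Real.pi)⁻¹)
      (fun s => hmvkD n k * s ^ ((n : ℝ) / 2) *
        (-Real.log (4 * Real.pi * s)) ^ ((n : ℝ) / 2 + (k : ℝ)))) := by
    rw [integrable_indicator_iff measurableSet_Ioo]
    have h := (hmvk_cov_int (n := n) ((n : ℝ) / 2 + (k : ℝ)) hκ).const_mul (hmvkD n k)
    exact MeasureTheory.IntegrableOn.congr_fun h (fun s _ => by ring) measurableSet_Ioo
  have hInt : Integrable (hmvkKern n k)
      ((volume : Measure (EuclideanSpace ℝ (Fin n))).prod (volume : Measure ℝ)) := by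
    rw [← MeasureTheory.Measure.volume_eq_prod _ _]
    apply (integrable_prod_iff'
      (((hmvk_measurable n k).aestronglyMeasurable).mono_measure
        (le_of_eq (MeasureTheory.Measure.volume_eq_prod _ _).symm))).mpr
    constructor
    · exact Filter.Eventually.of_forall (fun s => hmvk_inner_integrable hn k s)
    · have he : (fun s : ℝ => ∫ x : EuclideanSpace ℝ (Fin n), ‖hmvkKern n k (x, s)‖)
          = fun s : ℝ => Set.indicator (Set.Ioo 0 (4 * Real.pi)⁻¹)
              (fun s => hmvkD n k * s ^ ((n : ℝ) / 2) *
                (-Real.log (4 * Real.pi * s)) ^ ((n : ℝ) / 2 + (k : ℝ))) s := by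
        funext s
        rw [← hmvk_inner_eq hn k s]
        congr 1
        funext x
        exact Real.norm_of_nonneg (hmvk_kern_nonneg _)
      rw [he]
      exact hGint
  have hsplit : (∫ p : EuclideanSpace ℝ (Fin n) × ℝ, hmvkKern n k p)
      = ∫ s : ℝ, ∫ x : EuclideanSpace ℝ (Fin n), hmvkKern n k (x, s) := by
    rw [MeasureTheory.Measure.volume_eq_prod _ _]
    exact MeasureTheory.integral_prod_symm _ hInt
  rw [hsplit]
  have he2 : (fun s : ℝ => ∫ x : EuclideanSpace ℝ (Fin n), hmvkKern n k (x, s))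
      = Set.indicator (Set.Ioo 0 (4 * Real.pi)⁻¹)
          (fun s => hmvkD n k * s ^ ((n : ℝ) / 2) *
            (-Real.log (4 * Real.pi * s)) ^ ((n : ℝ) / 2 + (k : ℝ))) := by
    funext s; exact hmvk_inner_eq hn k s
  rw [he2, MeasureTheory.integral_indicator measurableSet_Ioo]
  have he3 : (∫ s in Set.Ioo 0 (4 * Real.pi)⁻¹,
        hmvkD n k * s ^ ((n : ℝ) / 2) *
          (-Real.log (4 * Real.pi * s)) ^ ((n : ℝ) / 2 + (k : ℝ)))
      = hmvkD n k * ∫ s in Set.Ioo 0 (4 * Real.pi)⁻¹,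
          s ^ ((n : ℝ) / 2) * (-Real.log (4 * Real.pi * s)) ^ ((n : ℝ) / 2 + (k : ℝ)) := by
    rw [← MeasureTheory.integral_const_mul _ _]
    congr 1
    funext s
    ring
  rw [he3, hmvk_cov ((n : ℝ) / 2 + (k : ℝ)) hκ]

/-- **Equality of the time moment and the normalized second space moment of `𝓗`.**
`∬ s 𝓗(y,s) dy ds = (1/(2n)) ∬ |y|² 𝓗(y,s) dy ds`; consequently, with
`μ = −∬ s 𝓗` and `ν = (1/(2n)) ∬ |y|² 𝓗`, one has `μ = −ν`. -/
theorem heatMVKernel_time_moment_eq_space_moment (n : ℕ) (hn : 1 ≤ n) :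
    ∫ p : EuclideanSpace ℝ (Fin n) × ℝ, p.2 * heatMVKernel n p
      = (1 / (2 * (n : ℝ))) *
          ∫ p : EuclideanSpace ℝ (Fin n) × ℝ, ‖p.1‖ ^ 2 * heatMVKernel n p := by
  have e1 : (∫ p : EuclideanSpace ℝ (Fin n) × ℝ, p.2 * heatMVKernel n p)
      = ∫ p : EuclideanSpace ℝ (Fin n) × ℝ, hmvkKern n 1 p := by
    congr 1
    funext p
    simp only [heatMVKernel, hmvkKern]
    by_cases h : 0 < p.2 ∧ 1 ≤ weierstrassW n p.1 p.2
    · rw [if_pos h, if_pos h]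
      have hs : p.2 ≠ 0 := ne_of_gt h.1
      field_simp
    · rw [if_neg h, if_neg h, mul_zero]
  have e2 : (∫ p : EuclideanSpace ℝ (Fin n) × ℝ, ‖p.1‖ ^ 2 * heatMVKernel n p)
      = ∫ p : EuclideanSpace ℝ (Fin n) × ℝ, hmvkKern n 2 p := by
    congr 1
    funext p
    simp only [heatMVKernel, hmvkKern]
    by_cases h : 0 < p.2 ∧ 1 ≤ weierstrassW n p.1 p.2
    · rw [if_pos h, if_pos h]
      ring
    · rw [if_neg h, if_neg h, mul_zero]
  rw [e1, e2, hmvk_integral hn 1, hmvk_integral hn 2]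
  -- algebra
  have hN1 : (1:ℝ) ≤ (n:ℝ) := by exact_mod_cast hn
  set N : ℝ := (n:ℝ)
  have hNpos : 0 < N := by linarith
  set ω : ℝ := hmvkBallVol n with hω
  set P : ℝ := (4 * Real.pi) ^ (-N / 2 - 1) with hP
  set a : ℝ := N / 2 + 1 with ha
  have hapos : 0 < a := by positivity
  -- Gamma recurrence : Γ(N/2 + 2 + 1) = (N/2+2) * Γ(N/2+2)
  have hg : Real.Gamma (N / 2 + (2:ℝ) + 1) = (N/2 + 2) * Real.Gamma (N / 2 + 2) := by
    rw [show N / 2 + (2:ℝ) + 1 = (N/2 + 2) + 1 from by ring, Real.Gamma_add_one (by positivity)]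
  have hg1 : Real.Gamma (N / 2 + (1:ℝ) + 1) = Real.Gamma (N / 2 + 2) := by congr 1; ring
  -- power recurrences
  have hp2 : (2 * N) ^ (N / 2 + (2:ℝ)) = (2 * N) ^ (N / 2 + (1:ℝ)) * (2 * N) := by
    rw [show N / 2 + (2:ℝ) = (N/2 + 1) + 1 from by ring, Real.rpow_add (by positivity),
      Real.rpow_one]
  have hp3 : a ^ (-(N / 2 + (2:ℝ) + 1)) = a ^ (-(N / 2 + (1:ℝ) + 1)) * a⁻¹ := by
    rw [show -(N / 2 + (2:ℝ) + 1) = -(N/2 + 1 + 1) + (-1) from by ring,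
      Real.rpow_add hapos, Real.rpow_neg_one]
  rw [hmvkD, hmvkD]
  push_cast
  rw [hg, hg1, hp2, hp3]
  set G : ℝ := Real.Gamma (N / 2 + 2)
  set A : ℝ := a ^ (-(N / 2 + (1:ℝ) + 1))
  set Q : ℝ := (2 * N) ^ (N / 2 + (1:ℝ))
  have h2 : N + 2 ≠ 0 := by positivity
  have h4 : N + 2 * 2 ≠ 0 := by positivity
  have hane : a ≠ 0 := ne_of_gt hapos
  have hkey : (N/2 + 2) = a * (N + 4) / (N + 2) := by
    rw [ha]
    field_simp
    ring
  field_simp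
  rw [ha]
  ring
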